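/- Let G be an edge-maximal distance critical simple graph and let S be the set of vertices of G that belong to some determining pair (of some vertex). Then every non-edge of G intersects S; that is, for every pair of distinct nonadjacent vertices x and y of G, at least one of x, y lies in S. -/

import Mathlib

/-- A graph is *distance critical* if for every vertex `v` there is a pair of vertices of
`G − v` whose distance in `G − v` differs from their distance in `G`
(distances are `ℕ∞`-valued, `⊤` when there is no connecting path). -/
def IsDistanceCritical {V : Type*} (G : SimpleGraph V) : Prop :=
  ∀ v : V, ∃ x y : ({v}ᶜ : Set V),
    (G.induce ({v}ᶜ : Set V)).edist x y ≠ G.edist (x : V) (y : V)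

/-- `{a, b}` is a *determining pair* for `v` : `a` and `b` are distinct, nonadjacent,
and `v` is their unique common neighbor. -/
def IsDeterminingPair {V : Type*} (G : SimpleGraph V) (v a b : V) : Prop :=
  a ≠ b ∧ ¬ G.Adj a b ∧ G.Adj a v ∧ G.Adj b v ∧
    ∀ w : V, G.Adj a w → G.Adj b w → w = v

/-- The graph obtained from `G` by adding the edge `xy`. -/
def addEdge {V : Type*} (G : SimpleGraph V) (x y : V) : SimpleGraph V :=
  G ⊔ SimpleGraph.edge x y

/-!
A vertex `v` witnesses distance criticality exactly when it has a determining pair. If deleting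
`v` lengthens a shortest `x`–`y` path, then `v` lies inside that path and its two neighbours
`a`, `b` on it form a determining pair, since an `a`–`b` walk of length at most `2` avoiding `v`
would shortcut the path. Conversely, a determining pair of `v` is at distance `2` in `G` but
further apart in `G − v`. Determining pairs only involve adjacencies at `a` and `b`, so adding an
edge `xy` with `x` and `y` outside every determining pair keeps them all, and `G + xy` would
again be distance critical.
-/

namespace SimpleGraph

variable {V : Type*} {G : SimpleGraph V}

lemma edist_le_edist_induce {s : Set V} (u w : s) :
    G.edist u w ≤ (G.induce s).edist u w := by
  by_cases hr : (G.induce s).Reachable u w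
  · obtain ⟨q, hq⟩ := hr.exists_walk_length_eq_edist
    rw [← hq, ← Walk.length_map (Embedding.induce s).toHom]
    exact edist_le _
  · exact edist_eq_top_of_not_reachable hr ▸ le_top

lemma edist_induce_le_length {s : Set V} {x y : V} (p : G.Walk x y)
    (hp : ∀ z ∈ p.support, z ∈ s) (hx : x ∈ s) (hy : y ∈ s) :
    (G.induce s).edist ⟨x, hx⟩ ⟨y, hy⟩ ≤ p.length := by
  calc (G.induce s).edist ⟨x, hx⟩ ⟨y, hy⟩ ≤ (p.induce s hp).length := edist_le _
    _ = p.length := congrArg Nat.cast <|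
      (Walk.length_map _ _).symm.trans (congrArg Walk.length (p.map_induce hp))

lemma Walk.IsPath.exists_adj_start {v y : V} {p : G.Walk v y} (hp : p.IsPath) (hvy : v ≠ y) :
    ∃ (b : V) (q : G.Walk b y), G.Adj v b ∧ v ∉ q.support ∧ q.length + 1 = p.length := by
  cases p with
  | nil => exact absurd rfl hvy
  | cons h q => exact ⟨_, q, h, ((Walk.cons_isPath_iff h q).1 hp).2, rfl⟩

lemma Walk.IsPath.exists_split_of_mem_support [DecidableEq V] {v x y : V} {p : G.Walk x y}
    (hp : p.IsPath) (hv : v ∈ p.support) (hvx : v ≠ x) (hvy : v ≠ y) :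
    ∃ (a b : V) (q₁ : G.Walk x a) (q₂ : G.Walk b y), G.Adj a v ∧ G.Adj v b ∧
      v ∉ q₁.support ∧ v ∉ q₂.support ∧ q₁.length + 2 + q₂.length = p.length := by
  obtain ⟨a, q₁, hva, hq₁, hlen₁⟩ := (hp.takeUntil hv).reverse.exists_adj_start hvx
  obtain ⟨b, q₂, hvb, hq₂, hlen₂⟩ := (hp.dropUntil hv).exists_adj_start hvy
  refine ⟨a, b, q₁.reverse, q₂, hva.symm, hvb, by simpa using hq₁, hq₂, ?_⟩
  have hsplit := congrArg Walk.length (p.take_spec hv)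
  simp only [Walk.length_append, Walk.length_reverse] at hsplit hlen₁ ⊢
  omega

end SimpleGraph

open SimpleGraph

section

variable {V : Type*} {G : SimpleGraph V}

lemma isDeterminingPair_iff_two_lt_edist_induce {v a b : V} (ha : a ∈ ({v}ᶜ : Set V))
    (hb : b ∈ ({v}ᶜ : Set V)) :
    IsDeterminingPair G v a b ↔
      G.Adj a v ∧ G.Adj b v ∧ 2 < (G.induce {v}ᶜ).edist ⟨a, ha⟩ ⟨b, hb⟩ := by
  rw [two_lt_edist_iff, Set.eq_empty_iff_forall_notMem]
  simp only [IsDeterminingPair, ne_eq, Subtype.mk.injEq, comap_adj,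
    Function.Embedding.subtype_apply, mem_commonNeighbors, Subtype.forall, Set.mem_compl_iff,
    Set.mem_singleton_iff]
  grind

lemma IsDeterminingPair.symm {v a b : V} (h : IsDeterminingPair G v a b) :
    IsDeterminingPair G v b a := by
  obtain ⟨hab, hnadj, hav, hbv, huniq⟩ := h
  exact ⟨hab.symm, fun h ↦ hnadj h.symm, hbv, hav, fun w hbw haw ↦ huniq w haw hbw⟩

lemma IsDeterminingPair.edist_eq_two {v a b : V} (h : IsDeterminingPair G v a b) :
    G.edist a b = 2 :=
  edist_eq_two_iff.2 ⟨h.1, h.2.1, v, h.2.2.1, h.2.2.2.1⟩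

lemma IsDeterminingPair.exists_edist_induce_ne {v a b : V} (h : IsDeterminingPair G v a b) :
    ∃ x y : ({v}ᶜ : Set V), (G.induce {v}ᶜ).edist x y ≠ G.edist x y := by
  have ha : a ∈ ({v}ᶜ : Set V) := h.2.2.1.ne
  have hb : b ∈ ({v}ᶜ : Set V) := h.2.2.2.1.ne
  refine ⟨⟨a, ha⟩, ⟨b, hb⟩, ?_⟩
  rw [h.edist_eq_two]
  exact ((isDeterminingPair_iff_two_lt_edist_induce ha hb).1 h).2.2.ne'

lemma exists_isDeterminingPair_of_edist_induce_ne {v : V} {x y : ({v}ᶜ : Set V)}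
    (h : (G.induce {v}ᶜ).edist x y ≠ G.edist x y) : ∃ a b, IsDeterminingPair G v a b := by
  classical
  set H := G.induce {v}ᶜ
  have hlt : G.edist x y < H.edist x y := (edist_le_edist_induce x y).lt_of_ne h.symm
  obtain ⟨p, hp, hplen⟩ := (reachable_of_edist_ne_top hlt.ne_top).exists_path_of_dist
  have hpd : (p.length : ℕ∞) = G.edist x y := hplen ▸ Reachable.coe_dist_eq_edist
    (reachable_of_edist_ne_top hlt.ne_top)
  have hv : v ∈ p.support := by
    by_contra hv
    refine (edist_induce_le_length p (fun z hz ↦ ?_) x.2 y.2).not_gt (hpd ▸ hlt)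
    rintro rfl
    exact hv hz
  obtain ⟨a, b, q₁, q₂, hav, hvb, hq₁, hq₂, hlen⟩ :=
    hp.exists_split_of_mem_support hv (fun h ↦ x.2 h.symm) (fun h ↦ y.2 h.symm)
  have ha : a ∈ ({v}ᶜ : Set V) := hav.ne
  have hb : b ∈ ({v}ᶜ : Set V) := hvb.ne'
  refine ⟨a, b, (isDeterminingPair_iff_two_lt_edist_induce ha hb).2 ⟨hav, hvb.symm, ?_⟩⟩
  by_contra! hab
  refine hlt.not_ge ?_
  calc H.edist x y ≤ H.edist x ⟨a, ha⟩ + H.edist ⟨a, ha⟩ ⟨b, hb⟩ + H.edist ⟨b, hb⟩ y :=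
        H.edist_triangle.trans (add_le_add_left H.edist_triangle _)
    _ ≤ q₁.length + 2 + q₂.length := by
        gcongr
        · exact edist_induce_le_length q₁ (fun z hz ↦ by rintro rfl; exact hq₁ hz) x.2 ha
        · exact edist_induce_le_length q₂ (fun z hz ↦ by rintro rfl; exact hq₂ hz) hb y.2
    _ = G.edist x y := by rw [← hpd, ← hlen]; push_cast; rfl

theorem isDistanceCritical_iff_forall_exists_isDeterminingPair :
    IsDistanceCritical G ↔ ∀ v, ∃ a b, IsDeterminingPair G v a b :=
  ⟨fun h v ↦ let ⟨_, _, hxy⟩ := h v; exists_isDeterminingPair_of_edist_induce_ne hxy,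
    fun h v ↦ let ⟨_, _, hab⟩ := h v; hab.exists_edist_induce_ne⟩

lemma addEdge_adj_iff_of_ne {x y a z : V} (hax : a ≠ x) (hay : a ≠ y) :
    (addEdge G x y).Adj a z ↔ G.Adj a z := by
  simp [addEdge, edge_adj, hax, hay]

lemma IsDeterminingPair.addEdge {v a b x y : V} (h : IsDeterminingPair G v a b)
    (hax : a ≠ x) (hay : a ≠ y) (hbx : b ≠ x) (hby : b ≠ y) :
    IsDeterminingPair (addEdge G x y) v a b := by
  obtain ⟨hab, hnadj, hav, hbv, huniq⟩ := h
  simp only [IsDeterminingPair, addEdge_adj_iff_of_ne hax hay, addEdge_adj_iff_of_ne hbx hby]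
  exact ⟨hab, hnadj, hav, hbv, huniq⟩

end

theorem stmt_17_general {V : Type*} (G : SimpleGraph V)
    (hG : IsDistanceCritical G)
    (hmax : ∀ x y : V, x ≠ y → ¬ G.Adj x y → ¬ IsDistanceCritical (addEdge G x y)) :
    ∀ x y : V, x ≠ y → ¬ G.Adj x y →
      x ∈ {u : V | ∃ v b : V, IsDeterminingPair G v u b} ∨
      y ∈ {u : V | ∃ v b : V, IsDeterminingPair G v u b} := by
  intro x y hxy hnadj
  by_contra! ⟨hxS, hyS⟩
  refine hmax x y hxy hnadj (isDistanceCritical_iff_forall_exists_isDeterminingPair.2 fun v ↦ ?_)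
  obtain ⟨a, b, hab⟩ := isDistanceCritical_iff_forall_exists_isDeterminingPair.1 hG v
  have hS {u w : V} (h : IsDeterminingPair G v u w) : u ≠ x ∧ u ≠ y :=
    ⟨by rintro rfl; exact hxS ⟨v, w, h⟩, by rintro rfl; exact hyS ⟨v, w, h⟩⟩
  exact ⟨a, b, hab.addEdge (hS hab).1 (hS hab).2 (hS hab.symm).1 (hS hab.symm).2⟩

theorem stmt_17 {V : Type*} [Fintype V] (G : SimpleGraph V)
    (hG : IsDistanceCritical G)
    (hmax : ∀ x y : V, x ≠ y → ¬ G.Adj x y → ¬ IsDistanceCritical (addEdge G x y)) :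
    ∀ x y : V, x ≠ y → ¬ G.Adj x y →
      x ∈ {u : V | ∃ v b : V, IsDeterminingPair G v u b} ∨
      y ∈ {u : V | ∃ v b : V, IsDeterminingPair G v u b} :=
  stmt_17_general G hG hmax
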